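/- For a free module E of rank r over a ring of prime characteristic p, the truncated symmetric algebra τ(E) = Sym(E)/(e^p : e ∈ E) has R-module rank p^r independent of the choice of basis. -/

import Mathlib

/-!
In characteristic `p` the Frobenius is additive, so `(∑ fⱼ Xⱼ)^p = ∑ fⱼ^p Xⱼ^p` and the ideal
generated by `p`-th powers of linear forms is the monomial ideal `(X₁^p, …, X_r^p)`. The quotient
by a monomial ideal is free on the monomials lying outside it, because the monomials inside and
outside span complementary submodules; here these are the `X^d` with every `dⱼ < p`, and there are
`p^r` of them.
-/

open MvPolynomial

namespace MvPolynomial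

variable {σ : Type*} (R : Type*) [CommRing R]

theorem isCompl_span_monomial_restrictSupport (S : Set (σ →₀ ℕ)) :
    IsCompl ((Ideal.span ((monomial · (1 : R)) '' S)).restrictScalars R)
      (restrictSupport R {d | ∀ s ∈ S, ¬ s ≤ d}) := by
  constructor
  · rw [Submodule.disjoint_def]
    intro q hq hq'
    rw [Submodule.restrictScalars_mem, mem_ideal_span_monomial_image] at hq
    rw [← support_eq_empty, Finset.eq_empty_iff_forall_notMem]
    intro d hd
    obtain ⟨s, hs, hsd⟩ := hq d hd
    exact hq' hd s hs hsd
  · rw [codisjoint_iff, Submodule.eq_top_iff']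
    intro q
    rw [q.as_sum]
    refine Submodule.sum_mem _ fun d _ => ?_
    by_cases h : ∃ s ∈ S, s ≤ d
    · refine Submodule.mem_sup_left ?_
      rw [Submodule.restrictScalars_mem, mem_ideal_span_monomial_image]
      intro d' hd'
      rwa [Finset.mem_singleton.mp (support_monomial_subset hd')]
    · push Not at h
      exact Submodule.mem_sup_right ((monomial_mem_restrictSupport R).mpr (Or.inl h))

noncomputable def basisQuotientSpanMonomial (S : Set (σ →₀ ℕ)) :
    Module.Basis {d | ∀ s ∈ S, ¬ s ≤ d} R
      (MvPolynomial σ R ⧸ Ideal.span ((monomial · (1 : R)) '' S)) :=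
  (basisRestrictSupport R _).map
    ((Submodule.quotientEquivOfIsCompl _ _ (isCompl_span_monomial_restrictSupport R S)).symm.trans
      (Submodule.Quotient.restrictScalarsEquiv R _))

theorem span_pow_linearForm_eq_span_monomial [Fintype σ] (p : ℕ) [ExpChar R p] :
    Ideal.span {q : MvPolynomial σ R | ∃ f : σ → R, q = (∑ j, C (f j) * X j) ^ p} =
      Ideal.span ((monomial · (1 : R)) '' Set.range fun j => Finsupp.single j p) := by
  classical
  apply le_antisymm
  · rw [Ideal.span_le]
    rintro _ ⟨f, rfl⟩
    rw [sum_pow_char]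
    refine Ideal.sum_mem _ fun j _ => ?_
    rw [mul_pow, ← C_pow, X_pow_eq_monomial]
    exact Ideal.mul_mem_left _ _ (Ideal.subset_span ⟨_, ⟨j, rfl⟩, rfl⟩)
  · rw [Ideal.span_le]
    rintro _ ⟨_, ⟨j, rfl⟩, rfl⟩
    refine Ideal.subset_span ⟨Pi.single j 1, ?_⟩
    simp [Pi.single_apply, X_pow_eq_monomial]

end MvPolynomial

noncomputable def Finsupp.ltEquivFunFin (σ : Type*) [Finite σ] (n : ℕ) :
    {d : σ →₀ ℕ // ∀ i, d i < n} ≃ (σ → Fin n) where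
  toFun d i := ⟨d.1 i, d.2 i⟩
  invFun f := ⟨Finsupp.equivFunOnFinite.symm fun i => f i, fun i => (f i).isLt⟩
  left_inv d := by ext; simp
  right_inv f := by ext; simp

theorem stmt_2 (R : Type*) [CommRing R] (p : ℕ) (hp : p.Prime) [CharP R p] (r : ℕ)
    (J : Ideal (MvPolynomial (Fin r) R))
    (hJ : J = Ideal.span {q : MvPolynomial (Fin r) R |
      ∃ f : Fin r → R, q = (∑ j, MvPolynomial.C (f j) * MvPolynomial.X j) ^ p}) :
    Nonempty (Module.Basis (Fin (p ^ r)) R (MvPolynomial (Fin r) R ⧸ J)) := by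
  have : Fact p.Prime := ⟨hp⟩
  subst hJ
  rw [span_pow_linearForm_eq_span_monomial]
  have standard_iff (d : Fin r →₀ ℕ) :
      (∀ s ∈ Set.range fun j => Finsupp.single j p, ¬ s ≤ d) ↔ ∀ j, d j < p := by
    simp [Finsupp.single_le_iff]
  exact ⟨(basisQuotientSpanMonomial R _).reindex <| (Equiv.subtypeEquivRight standard_iff).trans <|
    (Finsupp.ltEquivFunFin _ p).trans finFunctionFinEquiv⟩
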